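/- arXiv:2107.11764 — 2 statements merged into one kernel-verified Lean document; each statement's English description precedes it below -/
import Mathlib

section
/- Let Z be a symmetric matrix whose sparsity graph G(V,E) is chordal with maximal cliques C₁,…,C_m, each clique containing at least one index where Z has a nonzero diagonal entry forced (e.g., the common index corresponding to the constant 1). Then there exists a completion Z of the specified entries with Z ⪰ 0 and rank(Z) = 1 if and only if every clique principal submatrix satisfies S_{C_i}(Z) ⪰ 0 and rank(S_{C_i}(Z)) = 1 for all i; i.e., the global rank-1 PSD constraint decomposes exactly into per-clique rank-1 PSD constraints. -/
/-!
If `Z = v vᵀ` matches `Z'` on the diagonal and on the edges, every clique block of `Z'` is a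
block of `v vᵀ`; it is nonzero because of the nonzero diagonal entry, so its rank is exactly one.

Conversely, the vanishing 2×2 minors of the rank-one PSD clique blocks give
`Z'ᵢⱼ² = Z'ᵢᵢ Z'ⱼⱼ` on edges and `sign Z'ᵢⱼ · sign Z'ⱼₖ = sign Z'ᵢₖ` on triangles with nonzero
diagonal. So on the vertices with `Z'ᵢᵢ ≠ 0` the signs `σᵢⱼ = sign Z'ᵢⱼ` form a signed graph with
balanced triangles. In a chordal graph this forces every closed walk to be balanced: a shortest
unbalanced closed walk would be a cycle of length at least four, and a chord splits it into two
shorter closed walks, one of which is unbalanced. Hence `σᵢⱼ = εᵢ εⱼ` for a potential `ε`, and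
`vᵢ = εᵢ √Z'ᵢᵢ` gives the rank-one completion.
-/

/-- A simple graph is chordal if every (injective) cycle of length at least 4 has a chord. -/
def IsChordal {V : Type*} (G : SimpleGraph V) : Prop :=
  ∀ n : ℕ, 4 ≤ n → ∀ f : ZMod n → V, Function.Injective f →
    (∀ i, G.Adj (f i) (f (i + 1))) →
    ∃ i j : ZMod n, i ≠ j ∧ j ≠ i + 1 ∧ i ≠ j + 1 ∧ G.Adj (f i) (f j)

/-- A maximal clique: a clique not properly contained in any other clique. -/
def IsMaxClq {V : Type*} (G : SimpleGraph V) (s : Set V) : Prop :=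
  G.IsClique s ∧ ∀ t : Set V, G.IsClique t → s ⊆ t → s = t

namespace SimpleGraph

lemma isClique_triple {V : Type*} {G : SimpleGraph V} {x y z : V} (hxy : G.Adj x y)
    (hyz : G.Adj y z) (hxz : G.Adj x z) : G.IsClique ({x, y, z} : Set V) := by
  refine isClique_insert.mpr ⟨isClique_pair.mpr fun _ => hyz, ?_⟩
  rintro b (rfl | rfl) _ <;> assumption

namespace Walk

variable {V : Type*} {G : SimpleGraph V}

lemma exists_eq_append_loop_of_not_isPath {u v : V} (p : G.Walk u v) (hp : ¬p.IsPath) :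
    ∃ (x : V) (q₁ : G.Walk u x) (l : G.Walk x x) (q₂ : G.Walk x v),
      ¬l.Nil ∧ p = q₁.append (l.append q₂) := by
  classical
  induction p with
  | nil => exact absurd IsPath.nil hp
  | @cons u w v h p ih =>
    by_cases hpath : p.IsPath
    · have hu : u ∈ p.support := by
        by_contra hu
        exact hp ((cons_isPath_iff h p).mpr ⟨hpath, hu⟩)
      refine ⟨u, nil, cons h (p.takeUntil u hu), p.dropUntil u hu, not_nil_cons, ?_⟩
      simp [take_spec]
    · obtain ⟨x, q₁, l, q₂, hl, rfl⟩ := ih hpath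
      exact ⟨x, cons h q₁, l, q₂, hl, rfl⟩

lemma exists_eq_cons_append_loop_of_not_isCycle {u : V} (c : G.Walk u u) (hc : ¬c.IsCycle)
    (h3 : 3 ≤ c.length) :
    ∃ (v x : V) (h : G.Adj u v) (q₁ : G.Walk v x) (l : G.Walk x x) (q₂ : G.Walk x u),
      ¬l.Nil ∧ c = cons h (q₁.append (l.append q₂)) := by
  have hnil : ¬c.Nil := not_nil_iff_lt_length.mpr (by omega)
  have htail : ¬c.tail.IsPath := fun h => hc (isCycle_iff_isPath_tail_and_le_length.mpr ⟨h, h3⟩)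
  obtain ⟨x, q₁, l, q₂, hl, hq⟩ := c.tail.exists_eq_append_loop_of_not_isPath htail
  exact ⟨_, x, c.adj_snd hnil, q₁, l, q₂, hl, by rw [← hq, c.cons_tail_eq hnil]⟩

lemma two_le_length_of_mk_notMem_edges {x y : V} (hxy : x ≠ y) :
    ∀ p : G.Walk x y, s(x, y) ∉ p.edges → 2 ≤ p.length
  | nil, _ => absurd rfl hxy
  | cons _ nil, h => absurd (by simp) h
  | cons _ (cons _ _), _ => by simp

lemma exists_rotate_eq_append_of_isChord [DecidableEq V] {u x y : V} (c : G.Walk u u)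
    (hx : x ∈ c.support) (hxy : c.IsChord s(x, y)) :
    ∃ (P : G.Walk x y) (Q : G.Walk y x),
      2 ≤ P.length ∧ 2 ≤ Q.length ∧ c.rotate x hx = P.append Q := by
  obtain ⟨hadj, hnotin, -, hy⟩ := isChord_sym2Mk.mp hxy
  set c' := c.rotate x hx
  have hy' : y ∈ c'.support := (mem_support_rotate_iff c x hx).mpr hy
  have hnotin' : s(x, y) ∉ c'.edges := fun h => hnotin ((rotate_edges c x hx).mem_iff.mp h)
  refine ⟨c'.takeUntil y hy', c'.dropUntil y hy', ?_, ?_, (take_spec c' hy').symm⟩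
  · refine two_le_length_of_mk_notMem_edges hadj.ne _ fun h => hnotin' ?_
    exact edges_takeUntil_subset_edges c' hy' h
  · refine two_le_length_of_mk_notMem_edges hadj.ne.symm _ fun h => hnotin' ?_
    exact Sym2.eq_swap ▸ edges_dropUntil_subset_edges c' hy' h

variable {M : Type*} [CommMonoid M] (σ : V → V → M)

def gain {u v : V} (p : G.Walk u v) : M :=
  (p.darts.map fun d => σ d.fst d.snd).prod

@[simp] lemma gain_nil {u : V} : (nil : G.Walk u u).gain σ = 1 := rfl

@[simp] lemma gain_cons {u v w : V} (h : G.Adj u v) (p : G.Walk v w) :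
    (cons h p).gain σ = σ u v * p.gain σ := by
  simp [gain]

@[simp] lemma gain_append {u v w : V} (p : G.Walk u v) (q : G.Walk v w) :
    (p.append q).gain σ = p.gain σ * q.gain σ := by
  simp [gain]

@[simp] lemma gain_copy {u v u' v' : V} (p : G.Walk u v) (hu : u = u') (hv : v = v') :
    (p.copy hu hv).gain σ = p.gain σ := by
  simp [gain]

@[simp] lemma gain_concat {u v w : V} (p : G.Walk u v) (h : G.Adj v w) :
    (p.concat h).gain σ = p.gain σ * σ v w := by
  simp [gain]

lemma gain_rotate [DecidableEq V] {u v : V} (c : G.Walk u u) (h : v ∈ c.support) :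
    (c.rotate v h).gain σ = c.gain σ :=
  ((rotate_darts c v h).perm.map _).prod_eq

variable {σ}

lemma gain_reverse (hsymm : ∀ x y, G.Adj x y → σ y x = σ x y) {u v : V} (p : G.Walk u v) :
    p.reverse.gain σ = p.gain σ := by
  induction p with
  | nil => rfl
  | cons h p ih => simp [ih, hsymm _ _ h, mul_comm]

lemma gain_mul_self (hsq : ∀ x y, G.Adj x y → σ x y * σ x y = 1) {u v : V} (p : G.Walk u v) :
    p.gain σ * p.gain σ = 1 := by
  induction p with
  | nil => simp
  | cons h p ih => rw [gain_cons, mul_mul_mul_comm, hsq _ _ h, ih, one_mul]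

lemma gain_eq_one_of_length_le_three (hsymm : ∀ x y, G.Adj x y → σ y x = σ x y)
    (hsq : ∀ x y, G.Adj x y → σ x y * σ x y = 1)
    (htri : ∀ x y z, G.Adj x y → G.Adj y z → G.Adj x z → σ x y * σ y z = σ x z) {u : V} :
    ∀ c : G.Walk u u, c.length ≤ 3 → c.gain σ = 1
  | nil, _ => rfl
  | cons h nil, _ => absurd h (G.loopless.irrefl _)
  | cons h (cons _ nil), _ => by simp [hsymm _ _ h, hsq _ _ h]
  | cons h₁ (cons h₂ (cons h₃ nil)), _ => by
    simp only [gain_cons, gain_nil, mul_one]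
    rw [← mul_assoc, htri _ _ _ h₁ h₂ h₃.symm, hsymm _ _ h₃, hsq _ _ h₃]
  | cons _ (cons _ (cons _ (cons _ _))), h => by simp at h; omega

end Walk

end SimpleGraph

open SimpleGraph

section Chordal

variable {V : Type*} {G : SimpleGraph V}

theorem IsChordal.induce (hG : IsChordal G) (s : Set V) : IsChordal (G.induce s) := by
  intro n hn f hf hadj
  obtain ⟨i, j, hij, hj, hi, h⟩ := hG n hn (Subtype.val ∘ f)
    (Subtype.val_injective.comp hf) hadj
  exact ⟨i, j, hij, hj, hi, h⟩

lemma IsChordal.exists_isChord (hG : IsChordal G) {u : V} {c : G.Walk u u} (hc : c.IsCycle)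
    (h4 : 4 ≤ c.length) : ∃ e, c.IsChord e := by
  set n := c.length
  have : NeZero n := ⟨by omega⟩
  set f : ZMod n → V := fun i => c.getVert i.val
  have hf : ∀ k ≤ n, c.getVert k = f k := by
    intro k hk
    rcases hk.lt_or_eq with hk | rfl
    · simp [f, ZMod.val_cast_of_lt hk]
    · simp [f, n]
  have hf_succ : ∀ i : ZMod n, f (i + 1) = c.getVert (i.val + 1) := by
    intro i
    rw [hf _ (ZMod.val_lt i), Nat.cast_succ, ZMod.natCast_zmod_val]
  have hinj : Function.Injective f := fun i j h =>
    ZMod.val_injective n (hc.getVert_injOn' (by simp; have := ZMod.val_lt i; omega)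
      (by simp; have := ZMod.val_lt j; omega) h)
  obtain ⟨i, j, hij, hj, hi, hadj⟩ :=
    hG n h4 f hinj fun i => hf_succ i ▸ c.adj_getVert_succ (ZMod.val_lt i)
  refine ⟨s(f i, f j), Walk.isChord_sym2Mk.mpr ⟨hadj, fun hmem => ?_,
    c.getVert_mem_support _, c.getVert_mem_support _⟩⟩
  obtain ⟨k, hk, hkij⟩ := (c.mk_mem_edges_iff_exists).mp hmem
  rw [hf k hk.le, hf _ hk, Nat.cast_succ] at hkij
  rcases Sym2.eq_iff.mp hkij with ⟨hki, hkj⟩ | ⟨hkj, hki⟩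
  · exact hj (by rw [← hinj hkj, ← hinj hki])
  · exact hi (by rw [← hinj hkj, ← hinj hki])

lemma exists_isMaxClq_superset [Finite V] {s : Set V} (hs : G.IsClique s) :
    ∃ t : Finset V, s ⊆ t ∧ IsMaxClq G t := by
  obtain ⟨t, hst, ht⟩ := Finite.exists_le_maximal hs
  refine ⟨(Set.toFinite t).toFinset, by simpa using hst, by simpa using ht.1, fun u hu htu => ?_⟩
  rw [Set.Finite.coe_toFinset] at htu ⊢
  exact htu.antisymm (ht.2 hu htu)

variable {M : Type*} [CommMonoid M] {σ : V → V → M}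

theorem IsChordal.gain_eq_one (hG : IsChordal G) (hsymm : ∀ x y, G.Adj x y → σ y x = σ x y)
    (hsq : ∀ x y, G.Adj x y → σ x y * σ x y = 1)
    (htri : ∀ x y z, G.Adj x y → G.Adj y z → G.Adj x z → σ x y * σ y z = σ x z)
    {u : V} (c : G.Walk u u) : c.gain σ = 1 := by
  classical
  induction hn : c.length using Nat.strong_induction_on generalizing u with
  | _ n ih =>
  by_cases h3 : n ≤ 3
  · exact Walk.gain_eq_one_of_length_le_three hsymm hsq htri c (hn ▸ h3)
  by_cases hcyc : c.IsCycle
  · obtain ⟨e, he⟩ := hG.exists_isChord hcyc (by omega)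
    induction e using Sym2.ind with | _ x y => ?_
    obtain ⟨hxy, -, hx, -⟩ := Walk.isChord_sym2Mk.mp he
    -- The chord `xy` cuts the rotated cycle `P ++ Q` into the closed walks `P, yx` and `xy, Q`.
    obtain ⟨P, Q, hP, hQ, hPQ⟩ := c.exists_rotate_eq_append_of_isChord hx he
    have hlen : P.length + Q.length = n := by
      rw [← Walk.length_append, ← hPQ, Walk.length_rotate, hn]
    have h₁ := ih _ (by simp; omega) (P.concat hxy.symm) rfl
    have h₂ := ih _ (by simp; omega) (Walk.cons hxy Q) rfl
    calc c.gain σ = c.gain σ * (σ x y * σ x y) := by rw [hsq _ _ hxy, mul_one]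
      _ = (P.concat hxy.symm).gain σ * (Walk.cons hxy Q).gain σ := by
        rw [← Walk.gain_rotate σ c hx, hPQ]
        simp only [Walk.gain_append, Walk.gain_concat, Walk.gain_cons, hsymm _ _ hxy]
        ac_rfl
      _ = 1 := by rw [h₁, h₂, one_mul]
  · obtain ⟨v, x, h, q₁, l, q₂, hl, rfl⟩ :=
      c.exists_eq_cons_append_loop_of_not_isCycle hcyc (by omega)
    have hl' := Walk.not_nil_iff_lt_length.mp hl
    simp only [Walk.length_cons, Walk.length_append] at hn
    have h₁ := ih _ (by simp; omega) (Walk.cons h (q₁.append q₂)) rfl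
    have h₂ := ih _ (by omega) l rfl
    calc (Walk.cons h (q₁.append (l.append q₂))).gain σ
        = (Walk.cons h (q₁.append q₂)).gain σ * l.gain σ := by
          simp only [Walk.gain_append, Walk.gain_cons]
          ac_rfl
      _ = 1 := by rw [h₁, h₂, one_mul]

theorem IsChordal.gain_eq_gain (hG : IsChordal G) (hsymm : ∀ x y, G.Adj x y → σ y x = σ x y)
    (hsq : ∀ x y, G.Adj x y → σ x y * σ x y = 1)
    (htri : ∀ x y z, G.Adj x y → G.Adj y z → G.Adj x z → σ x y * σ y z = σ x z)
    {a b : V} (p q : G.Walk a b) : p.gain σ = q.gain σ := by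
  have h := hG.gain_eq_one hsymm hsq htri (p.append q.reverse)
  rw [Walk.gain_append, Walk.gain_reverse hsymm] at h
  calc p.gain σ = p.gain σ * (q.gain σ * q.gain σ) := by rw [Walk.gain_mul_self hsq, mul_one]
    _ = q.gain σ := by rw [← mul_assoc, h, one_mul]

theorem IsChordal.exists_potential (hG : IsChordal G) (hsymm : ∀ x y, G.Adj x y → σ y x = σ x y)
    (hsq : ∀ x y, G.Adj x y → σ x y * σ x y = 1)
    (htri : ∀ x y z, G.Adj x y → G.Adj y z → G.Adj x z → σ x y * σ y z = σ x z) :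
    ∃ ε : V → M, (∀ x, ε x * ε x = 1) ∧ ∀ x y, G.Adj x y → ε x * ε y = σ x y := by
  let root : V → V := fun x => Quot.out (G.connectedComponentMk x)
  have hroot : ∀ x, G.Reachable (root x) x := fun x =>
    ConnectedComponent.exact (Quot.out_eq _)
  refine ⟨fun x => (hroot x).some.gain σ, fun x => Walk.gain_mul_self hsq _, fun x y hxy => ?_⟩
  have hr : root x = root y := congrArg Quot.out (ConnectedComponent.sound hxy.reachable)
  have hy : (hroot y).some.gain σ = (hroot x).some.gain σ * σ x y := by
    rw [hG.gain_eq_gain hsymm hsq htri (hroot y).some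
      (((hroot x).some.concat hxy).copy hr rfl), Walk.gain_copy, Walk.gain_concat]
  simp only [hy, ← mul_assoc, Walk.gain_mul_self hsq, one_mul]

end Chordal

namespace Matrix

variable {m n K : Type*} [Fintype n] [Field K] {A : Matrix m n K}

theorem rank_eq_zero_iff : A.rank = 0 ↔ A = 0 := by
  classical
  rw [rank, Submodule.finrank_eq_zero, LinearMap.range_eq_bot]
  refine ⟨fun h => ?_, fun h => by simp [h]⟩
  ext i j
  simpa using congrFun (LinearMap.congr_fun h (Pi.single j 1)) i

theorem rank_eq_one_of_rank_le_one (h : A.rank ≤ 1) (hA : A ≠ 0) : A.rank = 1 :=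
  h.antisymm (Nat.one_le_iff_ne_zero.mpr (mt rank_eq_zero_iff.mp hA))

theorem mul_eq_mul_of_rank_le_one (hA : A.rank ≤ 1) (i k : m) (j l : n) :
    A i j * A k l = A i l * A k j := by
  classical
  obtain ⟨v, hv⟩ := finrank_le_one_iff.mp hA
  have hcol : ∀ j, ∃ c : K, ∀ i, A i j = c * (v : m → K) i := fun j => by
    obtain ⟨c, hc⟩ := hv ⟨A.mulVecLin (Pi.single j 1), LinearMap.mem_range_self _ _⟩
    exact ⟨c, fun i => by simpa using (congrFun (congrArg Subtype.val hc) i).symm⟩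
  choose c hc using hcol
  simp only [hc]
  ring

end Matrix

section RankOneCompletion

variable {V : Type*} {G : SimpleGraph V} {A : Matrix V V ℝ}

theorem IsChordal.exists_rankOne_completion_of_minors (hG : IsChordal G)
    (hdiag : ∀ i, 0 ≤ A i i) (hsymm : ∀ i j, G.Adj i j → A j i = A i j)
    (hminor : ∀ i j k, G.IsClique ({i, j, k} : Set V) → A i j * A j k = A i k * A j j) :
    ∃ v : V → ℝ, (∀ i, v i * v i = A i i) ∧ ∀ i j, G.Adj i j → v i * v j = A i j := by
  have hsq : ∀ i j, G.Adj i j → A i j * A i j = A i i * A j j := fun i j h => by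
    have := hminor i j i (by simpa [Set.pair_comm] using isClique_pair.mpr fun _ => h)
    rwa [hsymm i j h] at this
  -- Signs are consistent only where the diagonal is nonzero; elsewhere `hsq` kills edge entries.
  set S := {i | A i i ≠ 0}
  have hpos : ∀ i : S, 0 < A i i := fun i => (hdiag i).lt_of_ne (Ne.symm i.2)
  obtain ⟨ε, hεε, hε⟩ := (hG.induce S).exists_potential (σ := fun x y : S => SignType.sign (A x y))
    (fun x y h => by simp only [hsymm x y h])
    (fun x y h => by rw [← sign_mul, hsq x y h, sign_pos (mul_pos (hpos x) (hpos y))])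
    (fun x y z hxy hyz hxz => by
      rw [← sign_mul, hminor x y z (isClique_triple hxy hyz hxz), sign_mul, sign_pos (hpos y),
        mul_one])
  refine ⟨fun i => if h : A i i = 0 then 0 else ε ⟨i, h⟩ * √(A i i), fun i => ?_, fun i j h => ?_⟩
  · by_cases hi : A i i = 0
    · simp [hi]
    have hεi : (ε ⟨i, hi⟩ : ℝ) * ε ⟨i, hi⟩ = 1 := by
      simpa using congrArg ((↑) : SignType → ℝ) (hεε ⟨i, hi⟩)
    simp only [hi, dite_false]
    rw [mul_mul_mul_comm, hεi, Real.mul_self_sqrt (hdiag i), one_mul]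
  · by_cases hi : A i i = 0
    · simp [hi, show A i j = 0 by simpa [hi] using hsq i j h]
    by_cases hj : A j j = 0
    · simp [hj, show A i j = 0 by simpa [hj] using hsq i j h]
    have hεij : (ε ⟨i, hi⟩ : ℝ) * ε ⟨j, hj⟩ = SignType.sign (A i j) := by
      simpa using congrArg ((↑) : SignType → ℝ) (hε ⟨i, hi⟩ ⟨j, hj⟩ h)
    simp only [hi, hj, dite_false]
    rw [mul_mul_mul_comm, hεij, ← Real.sqrt_mul (hdiag i), ← hsq i j h,
      Real.sqrt_mul_self_eq_abs, sign_mul_abs]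

theorem IsChordal.exists_rankOne_completion [Fintype V] (hG : IsChordal G)
    (hA : ∀ s : Finset V, G.IsClique (s : Set V) →
      (A.submatrix (fun i : s => (i : V)) (fun j : s => (j : V))).PosSemidef ∧
      (A.submatrix (fun i : s => (i : V)) (fun j : s => (j : V))).rank ≤ 1) :
    ∃ v : V → ℝ, (∀ i, v i * v i = A i i) ∧ ∀ i j, G.Adj i j → v i * v j = A i j := by
  classical
  refine hG.exists_rankOne_completion_of_minors (fun i => ?_) (fun i j hij => ?_) fun i j k h => ?_
  · exact (hA {i} (by simp)).1.diag_nonneg (i := ⟨i, by simp⟩)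
  · have hij' : G.IsClique ((({i, j} : Finset V)) : Set V) := by
      simpa using isClique_pair.mpr fun _ => hij
    exact (hA _ hij').1.isHermitian.apply ⟨i, by simp⟩ ⟨j, by simp⟩
  · exact Matrix.mul_eq_mul_of_rank_le_one (hA {i, j, k} (by simpa using h)).2
      ⟨i, by simp⟩ ⟨j, by simp⟩ ⟨j, by simp⟩ ⟨k, by simp⟩

lemma posSemidef_and_rank_le_one_of_isClique [Fintype V]
    (hA : ∀ s : Finset V, IsMaxClq G (↑s : Set V) →
      (A.submatrix (fun i : s => (i : V)) (fun j : s => (j : V))).PosSemidef ∧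
      (A.submatrix (fun i : s => (i : V)) (fun j : s => (j : V))).rank = 1)
    {s : Finset V} (hs : G.IsClique (s : Set V)) :
    (A.submatrix (fun i : s => (i : V)) (fun j : s => (j : V))).PosSemidef ∧
      (A.submatrix (fun i : s => (i : V)) (fun j : s => (j : V))).rank ≤ 1 := by
  obtain ⟨t, hst, ht⟩ := exists_isMaxClq_superset hs
  obtain ⟨hpsd, hrank⟩ := hA t ht
  have hsub : A.submatrix (fun i : s => (i : V)) (fun j : s => (j : V)) =
      (A.submatrix (fun i : t => (i : V)) (fun j : t => (j : V))).submatrix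
        (Set.inclusion hst) (Set.inclusion hst) := rfl
  rw [hsub]
  exact ⟨hpsd.submatrix _, hrank ▸ Matrix.rank_submatrix_le _ _ _⟩

end RankOneCompletion

theorem stmt13_general {V : Type} [Fintype V]
    (G : SimpleGraph V) (hG : IsChordal G)
    (Z' : Matrix V V ℝ)
    (hnz : ∀ s : Finset V, IsMaxClq G (↑s : Set V) → ∃ i ∈ s, Z' i i ≠ 0) :
    (∃ Z : Matrix V V ℝ, Z.PosSemidef ∧ Z.rank = 1 ∧
        (∀ i, Z i i = Z' i i) ∧ (∀ i j, G.Adj i j → Z i j = Z' i j)) ↔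
      (∀ s : Finset V, IsMaxClq G (↑s : Set V) →
        (Z'.submatrix (fun i : s => (i : V)) (fun j : s => (j : V))).PosSemidef ∧
        (Z'.submatrix (fun i : s => (i : V)) (fun j : s => (j : V))).rank = 1) := by
  constructor
  · rintro ⟨Z, hpsd, hrank, hdiag, hadj⟩ s hs
    have hsub : Z'.submatrix (fun i : s => (i : V)) (fun j : s => (j : V)) =
        Z.submatrix (fun i : s => (i : V)) (fun j : s => (j : V)) := by
      ext i j
      by_cases hij : i = j
      · subst hij
        exact (hdiag i).symm
      · exact (hadj i j (hs.1 i.2 j.2 (Subtype.coe_injective.ne hij))).symm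
    obtain ⟨i, hi, hii⟩ := hnz s hs
    refine ⟨hsub ▸ hpsd.submatrix _, Matrix.rank_eq_one_of_rank_le_one
      (hsub ▸ hrank ▸ Matrix.rank_submatrix_le _ _ _) fun h => hii ?_⟩
    simpa using congrFun (congrFun h ⟨i, hi⟩) ⟨i, hi⟩
  · intro h
    obtain ⟨v, hvv, hv⟩ := hG.exists_rankOne_completion fun s hs =>
      posSemidef_and_rank_le_one_of_isClique h hs
    obtain ⟨t, -, ht⟩ := exists_isMaxClq_superset (SimpleGraph.isClique_empty (G := G))
    obtain ⟨i, -, hi⟩ := hnz t ht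
    refine ⟨Matrix.vecMulVec v v, by simpa using Matrix.posSemidef_vecMulVec_self_star v,
      Matrix.rank_eq_one_of_rank_le_one (Matrix.rank_vecMulVec_le v v) fun h0 => hi ?_,
      fun i => hvv i, hv⟩
    simpa [Matrix.vecMulVec_apply, hvv] using congrFun (congrFun h0 i) i

/-- exact decomposition of the global rank-1 PSD constraint into per-clique
rank-1 PSD constraints, for a chordal sparsity pattern in which every maximal clique
contains an index with a nonzero specified diagonal entry. -/
theorem stmt13 {V : Type} [Fintype V] [DecidableEq V]
    (G : SimpleGraph V) (hG : IsChordal G)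
    (Z' : Matrix V V ℝ) (hsymm : Z'.IsSymm)
    (hnz : ∀ s : Finset V, IsMaxClq G (↑s : Set V) → ∃ i ∈ s, Z' i i ≠ 0) :
    (∃ Z : Matrix V V ℝ, Z.PosSemidef ∧ Z.rank = 1 ∧
        (∀ i, Z i i = Z' i i) ∧ (∀ i j, G.Adj i j → Z i j = Z' i j)) ↔
      (∀ s : Finset V, IsMaxClq G (↑s : Set V) →
        (Z'.submatrix (fun i : s => (i : V)) (fun j : s => (j : V))).PosSemidef ∧
        (Z'.submatrix (fun i : s => (i : V)) (fun j : s => (j : V))).rank = 1) :=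
  stmt13_general G hG Z' hnz
end

section
/- Let G_n(N, B) be a graph and construct G by taking n_c+1 disjoint copies of G_n (one per collocation point), adding edges so that the copies of each vertex across all collocation points are pairwise adjacent and any two vertices in different copies are adjacent whenever their underlying vertices are adjacent or equal in G_n, and adding one extra vertex v* adjacent to everything. Then G is chordal if and only if G_n is chordal, and when G_n is chordal with maximal cliques {C_{n1},…,C_{nm}}, the maximal cliques of G are exactly the sets (⋃ over all n_c+1 copies of C_{nj}) ∪ {v*} for j = 1,…,m. -/
/-- The graph `G` built from `G_n`: `n_c + 1` copies of `G_n` (vertices `(p, v)`), with the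
copies of each vertex pairwise adjacent, vertices of different copies adjacent whenever
their underlying vertices are adjacent or equal in `G_n` (adjacency in the same copy given
by `G_n`), plus one extra universal vertex `v* = Sum.inr ()`. -/
def blowUp (nc : ℕ) (N : Type*) (Gn : SimpleGraph N) :
    SimpleGraph ((Fin (nc + 1) × N) ⊕ Unit) where
  Adj a b :=
    match a, b with
    | Sum.inl (p, v), Sum.inl (q, w) => (v = w ∧ p ≠ q) ∨ Gn.Adj v w
    | Sum.inl _, Sum.inr _ => True
    | Sum.inr _, Sum.inl _ => True
    | Sum.inr _, Sum.inr _ => False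
  symm := by
    refine ⟨?_⟩
    rintro (⟨p, v⟩ | u) (⟨q, w⟩ | u') h
    · rcases h with ⟨rfl, hpq⟩ | h
      · exact Or.inl ⟨rfl, hpq.symm⟩
      · exact Or.inr h.symm
    · trivial
    · trivial
    · exact h
  loopless := by
    refine ⟨?_⟩
    rintro (⟨p, v⟩ | u) h
    · rcases h with ⟨_, hpq⟩ | h
      · exact hpq rfl
      · exact Gn.loopless.irrefl v h
    · exact h

/-!
A cycle of length at least 4 through the universal vertex `v*` has the chord from `v*` to the
vertex two steps further on. A cycle avoiding `v*` is projected to `G_n`: if two consecutive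
vertices are copies of the same vertex, the first one is adjacent to the successor of the
second; if two non-consecutive vertices are, they form a chord; otherwise the projection is a
cycle of `G_n`, whose chord lifts. Conversely `G_n` is an induced subgraph (any single copy).

For the cliques, projecting to `G_n` and taking all copies plus `v*` form a Galois insertion
between vertex sets which sends cliques to cliques in both directions, and such a pair matches
the maximal elements on the two sides.
-/

theorem ZMod.skip_two_nonconsecutive {n : ℕ} (hn : 4 ≤ n) (i : ZMod n) :
    i ≠ i + 2 ∧ i + 2 ≠ i + 1 ∧ i ≠ i + 2 + 1 := by
  have hk : ∀ k : ℕ, 0 < k → k < n → (k : ZMod n) ≠ 0 := fun k hk0 hkn h =>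
    absurd (Nat.le_of_dvd hk0 ((ZMod.natCast_eq_zero_iff k n).mp h)) (by omega)
  refine ⟨fun h => hk 2 two_pos (by omega) ?_, fun h => hk 1 one_pos (by omega) ?_,
    fun h => hk 3 three_pos (by omega) ?_⟩
  · push_cast; linear_combination -h
  · push_cast; linear_combination h
  · push_cast; linear_combination -h

section Chordal

variable {V W : Type*} {G : SimpleGraph V} {H : SimpleGraph W}

theorem exists_chord_of_adj_skip_two {n : ℕ} (hn : 4 ≤ n) {f : ZMod n → V} (i : ZMod n)
    (h : G.Adj (f i) (f (i + 2))) :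
    ∃ i j : ZMod n, i ≠ j ∧ j ≠ i + 1 ∧ i ≠ j + 1 ∧ G.Adj (f i) (f j) :=
  ⟨i, i + 2, (ZMod.skip_two_nonconsecutive hn i).1, (ZMod.skip_two_nonconsecutive hn i).2.1,
    (ZMod.skip_two_nonconsecutive hn i).2.2, h⟩

theorem IsChordal.of_embedding (hG : IsChordal G) (e : H ↪g G) : IsChordal H := by
  intro n hn f hf hadj
  obtain ⟨i, j, hij, hj, hi, hchord⟩ :=
    hG n hn (e ∘ f) (e.injective.comp hf) fun i => e.map_adj_iff.mpr (hadj i)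
  exact ⟨i, j, hij, hj, hi, e.map_adj_iff.mp hchord⟩

theorem IsChordal.of_embedding_of_universal (hH : IsChordal H) (e : H ↪g G)
    (huniv : ∀ x ∉ Set.range e, ∀ y, x ≠ y → G.Adj x y) : IsChordal G := by
  intro n hn f hf hadj
  by_cases hrange : ∀ i, f i ∈ Set.range e
  · choose g hg using hrange
    have hgf : e ∘ g = f := funext hg
    obtain ⟨i, j, hij, hj, hi, hchord⟩ := hH n hn g
      (Function.Injective.of_comp (f := e) (hgf ▸ hf))
      fun i => e.map_adj_iff.mp (by rw [hg, hg]; exact hadj i)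
    exact ⟨i, j, hij, hj, hi, by rw [← hg, ← hg]; exact e.map_adj_iff.mpr hchord⟩
  · push Not at hrange
    obtain ⟨i, hi⟩ := hrange
    exact exists_chord_of_adj_skip_two hn i
      (huniv _ hi _ (hf.ne (ZMod.skip_two_nonconsecutive hn i).1))

theorem IsChordal.of_twin_expansion (hH : IsChordal H) (π : V → W)
    (hadj : ∀ x y, G.Adj x y ↔ x ≠ y ∧ (π x = π y ∨ H.Adj (π x) (π y))) : IsChordal G := by
  intro n hn f hf hcycle
  have hstep : ∀ i, π (f i) = π (f (i + 1)) ∨ H.Adj (π (f i)) (π (f (i + 1))) :=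
    fun i => ((hadj _ _).mp (hcycle i)).2
  by_cases htwin : ∃ i, π (f i) = π (f (i + 1))
  · -- `f i` is a twin of `f (i + 1)`, so it sees every neighbour of `f (i + 1)`
    obtain ⟨i, hi⟩ := htwin
    refine exists_chord_of_adj_skip_two hn i ((hadj _ _).mpr
      ⟨hf.ne (ZMod.skip_two_nonconsecutive hn i).1, ?_⟩)
    rw [hi, ← one_add_one_eq_two, ← add_assoc]
    exact hstep (i + 1)
  push Not at htwin
  by_cases hinj : Function.Injective (π ∘ f)
  · obtain ⟨i, j, hij, hj, hi, hchord⟩ :=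
      hH n hn (π ∘ f) hinj fun i => (hstep i).resolve_left (htwin i)
    exact ⟨i, j, hij, hj, hi, (hadj _ _).mpr ⟨hf.ne hij, Or.inr hchord⟩⟩
  · obtain ⟨i, j, hπ, hij⟩ := Function.not_injective_iff.mp hinj
    refine ⟨i, j, hij, fun h => htwin i (h ▸ hπ), fun h => htwin j (h ▸ hπ.symm),
      (hadj _ _).mpr ⟨hf.ne hij, Or.inl hπ⟩⟩

end Chordal

theorem GaloisInsertion.maximal_iff {α β : Type*} [PartialOrder α] [PartialOrder β]
    {l : α → β} {u : β → α} (gi : GaloisInsertion l u) {P : α → Prop} {Q : β → Prop}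
    (hl : ∀ a, P a → Q (l a)) (hu : ∀ b, Q b → P (u b)) {a : α} :
    Maximal P a ↔ ∃ b, Maximal Q b ∧ a = u b := by
  constructor
  · intro ha
    have hlu : a = u (l a) :=
      le_antisymm (gi.gc.le_u_l a) (ha.2 (hu _ (hl _ ha.1)) (gi.gc.le_u_l a))
    refine ⟨l a, ⟨hl _ ha.1, fun b hb hab => ?_⟩, hlu⟩
    calc b = l (u b) := (gi.l_u_eq b).symm
      _ ≤ l a := gi.gc.monotone_l (ha.2 (hu b hb) ((gi.gc _ _).mp hab))
  · rintro ⟨b, hb, rfl⟩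
    refine ⟨hu _ hb.1, fun a ha hba => ?_⟩
    have hb_le : b ≤ l a := gi.l_u_eq b ▸ gi.gc.monotone_l hba
    exact gi.gc.le_u (hb.2 (hl _ ha) hb_le)

theorem isMaxClq_iff_maximal {V : Type*} {G : SimpleGraph V} {s : Set V} :
    IsMaxClq G s ↔ Maximal G.IsClique s :=
  ⟨fun h => ⟨h.1, fun _ ht hst => (h.2 _ ht hst).symm.le⟩,
    fun h => ⟨h.1, fun _ ht hst => hst.antisymm (h.2 ht hst)⟩⟩

namespace blowUp

variable {nc : ℕ} {N : Type*} {Gn : SimpleGraph N}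

theorem adj_inl_inl {x y : Fin (nc + 1) × N} :
    (blowUp nc N Gn).Adj (Sum.inl x) (Sum.inl y) ↔ x ≠ y ∧ (x.2 = y.2 ∨ Gn.Adj x.2 y.2) := by
  obtain ⟨p, v⟩ := x
  obtain ⟨q, w⟩ := y
  change (v = w ∧ p ≠ q) ∨ Gn.Adj v w ↔ _
  by_cases hvw : v = w
  · subst hvw
    simp
  · simp [hvw]

theorem adj_inr (x : (Fin (nc + 1) × N) ⊕ Unit) (hx : x ≠ Sum.inr ()) :
    (blowUp nc N Gn).Adj (Sum.inr ()) x := by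
  obtain _ | ⟨⟩ := x
  · trivial
  · exact absurd rfl hx

def copyEmbedding (p : Fin (nc + 1)) : Gn ↪g blowUp nc N Gn where
  toFun v := Sum.inl (p, v)
  inj' _ _ h := (Prod.ext_iff.mp (Sum.inl_injective h)).2
  map_rel_iff' {v w} := by
    change (blowUp nc N Gn).Adj (Sum.inl (p, v)) (Sum.inl (p, w)) ↔ _
    rw [adj_inl_inl]
    exact ⟨fun h => h.2.resolve_left fun hvw => h.1 (Prod.ext rfl hvw), fun h =>
      ⟨fun hvw => h.ne (Prod.ext_iff.mp hvw).2, Or.inr h⟩⟩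

theorem isChordal_iff : IsChordal (blowUp nc N Gn) ↔ IsChordal Gn := by
  refine ⟨fun h => h.of_embedding (copyEmbedding 0), fun h => ?_⟩
  have hcore : IsChordal ((blowUp nc N Gn).comap Sum.inl) :=
    h.of_twin_expansion Prod.snd fun _ _ => adj_inl_inl
  refine hcore.of_embedding_of_universal (SimpleGraph.Embedding.comap .inl _) ?_
  rintro (x | ⟨⟩) hx y hxy
  · exact absurd ⟨x, rfl⟩ hx
  · exact adj_inr y hxy.symm

variable (nc) in
def liftSet (C : Set N) : Set ((Fin (nc + 1) × N) ⊕ Unit) :=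
  (Sum.inl '' (Prod.snd ⁻¹' C)) ∪ {Sum.inr ()}

@[simp]
theorem inl_mem_liftSet {C : Set N} {x : Fin (nc + 1) × N} :
    Sum.inl x ∈ liftSet nc C ↔ x.2 ∈ C := by
  simp [liftSet]

@[simp]
theorem inr_mem_liftSet {C : Set N} : Sum.inr () ∈ liftSet nc C := by
  simp [liftSet]

def projSet (s : Set ((Fin (nc + 1) × N) ⊕ Unit)) : Set N :=
  {v | ∃ p, Sum.inl (p, v) ∈ s}

theorem gc_projSet_liftSet : GaloisConnection (projSet (nc := nc) (N := N)) (liftSet nc) := by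
  intro s C
  constructor
  · rintro h (⟨p, v⟩ | ⟨⟩) hx
    · exact inl_mem_liftSet.mpr (h ⟨p, hx⟩)
    · exact inr_mem_liftSet
  · rintro h v ⟨p, hp⟩
    exact inl_mem_liftSet.mp (h hp)

def galoisInsertion_projSet_liftSet :
    GaloisInsertion (projSet (nc := nc) (N := N)) (liftSet nc) :=
  gc_projSet_liftSet.toGaloisInsertion fun _ _ hv => ⟨0, inl_mem_liftSet.mpr hv⟩

theorem isClique_projSet {s : Set ((Fin (nc + 1) × N) ⊕ Unit)}
    (hs : (blowUp nc N Gn).IsClique s) : Gn.IsClique (projSet s) := by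
  rintro v ⟨p, hp⟩ w ⟨q, hq⟩ hvw
  have hadj := hs hp hq (by simp [hvw])
  exact (adj_inl_inl.mp hadj).2.resolve_left hvw

theorem isClique_liftSet {C : Set N} (hC : Gn.IsClique C) :
    (blowUp nc N Gn).IsClique (liftSet nc C) := by
  rintro (x | ⟨⟩) hx (y | ⟨⟩) hy hxy
  · rw [inl_mem_liftSet] at hx hy
    rw [adj_inl_inl]
    exact ⟨fun h => hxy (by rw [h]), or_iff_not_imp_left.mpr (hC hx hy)⟩
  · exact (adj_inr _ hxy).symm
  · exact adj_inr _ hxy.symm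
  · exact absurd rfl hxy

theorem isMaxClq_iff {s : Set ((Fin (nc + 1) × N) ⊕ Unit)} :
    IsMaxClq (blowUp nc N Gn) s ↔ ∃ C, IsMaxClq Gn C ∧ s = liftSet nc C := by
  simp only [isMaxClq_iff_maximal]
  exact galoisInsertion_projSet_liftSet.maximal_iff (fun _ => isClique_projSet)
    fun _ => isClique_liftSet

end blowUp

theorem stmt17_general (nc : ℕ) (N : Type) (Gn : SimpleGraph N) :
    (IsChordal (blowUp nc N Gn) ↔ IsChordal Gn) ∧
      (IsChordal Gn →
        ∀ s : Set ((Fin (nc + 1) × N) ⊕ Unit),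
          IsMaxClq (blowUp nc N Gn) s ↔
            ∃ C : Set N, IsMaxClq Gn C ∧
              s = (Sum.inl '' {pv : Fin (nc + 1) × N | pv.2 ∈ C}) ∪ {Sum.inr ()}) :=
  ⟨blowUp.isChordal_iff, fun _ _ => blowUp.isMaxClq_iff⟩

/-- the blow-up of `G_n` with a universal vertex is chordal iff `G_n` is
chordal, and when `G_n` is chordal, the maximal cliques of the blow-up are exactly the
unions of all copies of a maximal clique of `G_n` together with the universal vertex. -/
theorem stmt17 (nc : ℕ) (N : Type) [Fintype N] [DecidableEq N] (Gn : SimpleGraph N) :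
    (IsChordal (blowUp nc N Gn) ↔ IsChordal Gn) ∧
      (IsChordal Gn →
        ∀ s : Set ((Fin (nc + 1) × N) ⊕ Unit),
          IsMaxClq (blowUp nc N Gn) s ↔
            ∃ C : Set N, IsMaxClq Gn C ∧
              s = (Sum.inl '' {pv : Fin (nc + 1) × N | pv.2 ∈ C}) ∪ {Sum.inr ()}) :=
  stmt17_general nc N Gn
end
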